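/- Let d ≥ 1, n ≥ 1, and let k be an integer with 2 ≤ k ≤ n. Then ∫_{(k-1)/n}^{1} (r + 1/n)^d r^{-d-1} dr ≤ -log((k-1)/n) + 2^d. -/

import Mathlib

/-! For `t ∈ [0, 1]` the convex function `(1 + t)^d` lies below its chord `1 + (2^d - 1) t`.
With `t = 1/(n r)` and `r ≥ (k-1)/n ≥ 1/n` this bounds the integrand by `1/r + (2^d - 1)/(n r^2)`,
whose integral over `[(k-1)/n, 1]` is `-log((k-1)/n)` plus at most `(2^d - 1)/(k - 1) ≤ 2^d`. -/

open Real intervalIntegral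

lemma one_add_pow_le_one_add_mul {t : ℝ} (ht₀ : 0 ≤ t) (ht₁ : t ≤ 1) (d : ℕ) :
    (1 + t) ^ d ≤ 1 + (2 ^ d - 1) * t := by
  induction d with
  | zero => simp
  | succ d ih =>
    have h2 : (1 : ℝ) ≤ 2 ^ d := one_le_pow₀ (by norm_num)
    calc (1 + t) ^ (d + 1) = (1 + t) ^ d * (1 + t) := pow_succ _ _
      _ ≤ (1 + (2 ^ d - 1) * t) * (1 + t) := by gcongr
      _ ≤ 1 + (2 ^ (d + 1) - 1) * t := by
        rw [pow_succ]
        nlinarith [mul_nonneg (sub_nonneg.2 h2) (mul_nonneg ht₀ (sub_nonneg.2 ht₁))]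

lemma add_pow_div_pow_succ_le {ε r : ℝ} (hε : 0 ≤ ε) (hεr : ε ≤ r) (hr : 0 < r) (d : ℕ) :
    (r + ε) ^ d / r ^ (d + 1) ≤ r⁻¹ + (2 ^ d - 1) * ε / r ^ 2 := by
  have hchord := one_add_pow_le_one_add_mul (div_nonneg hε hr.le) ((div_le_one hr).2 hεr) d
  calc (r + ε) ^ d / r ^ (d + 1) = (1 + ε / r) ^ d / r := by
        rw [one_add_div hr.ne', div_pow, pow_succ, div_div]
    _ ≤ (1 + (2 ^ d - 1) * (ε / r)) / r := by gcongr
    _ = r⁻¹ + (2 ^ d - 1) * ε / r ^ 2 := by field_simp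

lemma integral_inv_add_div_sq {a b : ℝ} (ha : 0 < a) (hb : 0 < b) (c : ℝ) :
    ∫ r in a..b, (r⁻¹ + c / r ^ 2) = log (b / a) + c * (a⁻¹ - b⁻¹) := by
  have h0 : (0 : ℝ) ∉ Set.uIcc a b := Set.notMem_uIcc_of_lt ha hb
  have hsq : ∀ r : ℝ, c / r ^ 2 = c * r ^ (-2 : ℤ) := fun r => by
    rw [zpow_neg, div_eq_mul_inv]; norm_cast
  simp only [hsq]
  have hne : ∀ x ∈ Set.uIcc a b, x ≠ 0 := fun x hx => ne_of_mem_of_not_mem hx h0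
  rw [integral_add (intervalIntegrable_inv hne continuousOn_id)
      ((intervalIntegrable_zpow (Or.inr h0)).const_mul c),
    integral_inv h0, integral_const_mul, integral_zpow (Or.inr ⟨by norm_num, h0⟩)]
  norm_num [div_neg]

theorem stmt8_general (d n k : ℕ) (hk : 2 ≤ k) (hkn : k ≤ n) :
    ∫ r in (((k:ℝ) - 1)/(n:ℝ))..1, (r + 1/(n:ℝ)) ^ d / r ^ (d + 1)
      ≤ -Real.log (((k:ℝ) - 1)/(n:ℝ)) + 2 ^ d := by
  set a : ℝ := ((k:ℝ) - 1) / n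
  have hn : (0 : ℝ) < n := by exact_mod_cast (by omega : 0 < n)
  have hk₁ : (1 : ℝ) ≤ k - 1 := by
    have : (2 : ℝ) ≤ k := by exact_mod_cast hk
    linarith
  have ha : 0 < a := div_pos (by linarith) hn
  have ha₁ : a ≤ 1 := (div_le_one hn).2 (by linarith [(Nat.cast_le (α := ℝ)).2 hkn])
  have hεa : 1 / (n : ℝ) ≤ a := div_le_div_of_nonneg_right hk₁ hn.le
  have hne : ∀ r ∈ Set.uIcc a 1, r ≠ 0 := fun r hr =>
    ne_of_mem_of_not_mem hr (Set.notMem_uIcc_of_lt ha one_pos)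
  calc ∫ r in a..1, (r + 1 / (n : ℝ)) ^ d / r ^ (d + 1)
      ≤ ∫ r in a..1, (r⁻¹ + (2 ^ d - 1) * (1 / n) / r ^ 2) := by
        have hpow : ∀ m : ℕ, ∀ r ∈ Set.uIcc a 1, r ^ m ≠ 0 := fun m r hr =>
          pow_ne_zero m (hne r hr)
        refine integral_mono_on ha₁ ?_ ?_ fun r hr =>
          add_pow_div_pow_succ_le (by positivity) (hεa.trans hr.1) (ha.trans_le hr.1) d
        · exact (ContinuousOn.div (by fun_prop) (by fun_prop) (hpow _)).intervalIntegrable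
        · exact ((continuousOn_id.inv₀ hne).add
            (continuousOn_const.div (by fun_prop) (hpow 2))).intervalIntegrable
    _ = log (1 / a) + (2 ^ d - 1) * (1 / n) * (a⁻¹ - 1⁻¹) := integral_inv_add_div_sq ha one_pos _
    _ ≤ -log a + 2 ^ d := by
        have h2 : (1 : ℝ) ≤ 2 ^ d := one_le_pow₀ (by norm_num)
        have hεa' : 1 / (n : ℝ) * a⁻¹ ≤ 1 := by
          rw [← div_eq_mul_inv]; exact (div_le_one ha).2 hεa
        rw [one_div a, log_inv, inv_one]
        nlinarith [mul_le_mul_of_nonneg_left hεa' (sub_nonneg.2 h2), one_div_pos.2 hn]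

/-- For `2 ≤ k ≤ n`:
`∫_{(k-1)/n}^1 (r+1/n)^d r^{-d-1} dr ≤ -log((k-1)/n) + 2^d`. -/
theorem stmt8 (d n k : ℕ) (hd : 1 ≤ d) (hk : 2 ≤ k) (hkn : k ≤ n) :
    ∫ r in (((k:ℝ) - 1)/(n:ℝ))..1, (r + 1/(n:ℝ)) ^ d / r ^ (d + 1)
      ≤ -Real.log (((k:ℝ) - 1)/(n:ℝ)) + 2 ^ d :=
  stmt8_general d n k hk hkn
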